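/- arXiv:1501.07542 — 5 statements merged into one kernel-verified Lean document; each statement's English description precedes it below -/
import Mathlib

section
/- The function ρ(b,c) = |b-c|/(1-bc) defines a metric on the open interval (-1,1): it is nonnegative, vanishes exactly when b = c, is symmetric, and satisfies the triangle inequality ρ(a,c) ≤ ρ(a,b) + ρ(b,c) for all a,b,c ∈ (-1,1). -/
/-!
On an ordered triple `a ≤ b ≤ c` the triangle inequality for `ρ` cross-multiplies to
`0 ≤ (b - a) (c - b) (c - a)`. If `b` lies outside `[a, c]`, it follows instead from monotonicity
of `x ↦ ρ(a, x)` on `[a, 1)`, whose cross-multiplied form is `0 ≤ (c - b) (1 - a²)`.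
-/

/-- The hyperbolic-type distance `ρ(b,c) = |b - c| / (1 - b c)` on `(-1,1)`. -/
noncomputable def neelRho (b c : ℝ) : ℝ := |b - c| / (1 - b * c)

open Set

lemma one_sub_mul_pos_of_mem_Ioo {b c : ℝ} (hb : b ∈ Ioo (-1 : ℝ) 1) (hc : c ∈ Ioo (-1 : ℝ) 1) :
    0 < 1 - b * c := by
  obtain ⟨hb₁, hb₂⟩ := hb
  obtain ⟨hc₁, hc₂⟩ := hc
  nlinarith

lemma neelRho_comm (b c : ℝ) : neelRho b c = neelRho c b := by
  rw [neelRho, neelRho, abs_sub_comm, mul_comm]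

lemma neelRho_neg_neg (b c : ℝ) : neelRho (-b) (-c) = neelRho b c := by
  rw [neelRho, neelRho, neg_mul_neg, ← neg_sub', abs_neg, abs_sub_comm]

lemma neelRho_of_le {b c : ℝ} (h : b ≤ c) : neelRho b c = (c - b) / (1 - b * c) := by
  rw [neelRho, abs_sub_comm, abs_of_nonneg (sub_nonneg.mpr h)]

lemma neelRho_nonneg {b c : ℝ} (hb : b ∈ Ioo (-1 : ℝ) 1) (hc : c ∈ Ioo (-1 : ℝ) 1) :
    0 ≤ neelRho b c :=
  div_nonneg (abs_nonneg _) (one_sub_mul_pos_of_mem_Ioo hb hc).le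

lemma neelRho_eq_zero_iff {b c : ℝ} (hb : b ∈ Ioo (-1 : ℝ) 1) (hc : c ∈ Ioo (-1 : ℝ) 1) :
    neelRho b c = 0 ↔ b = c := by
  rw [neelRho, div_eq_zero_iff, abs_eq_zero, sub_eq_zero,
    or_iff_left (one_sub_mul_pos_of_mem_Ioo hb hc).ne']

lemma neelRho_mono_right {a b c : ℝ} (ha : a ∈ Ioo (-1 : ℝ) 1) (hb : b ∈ Ioo (-1 : ℝ) 1)
    (hc : c ∈ Ioo (-1 : ℝ) 1) (hab : a ≤ b) (hbc : b ≤ c) : neelRho a b ≤ neelRho a c := by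
  have haa := one_sub_mul_pos_of_mem_Ioo ha ha
  rw [neelRho_of_le hab, neelRho_of_le (hab.trans hbc),
    div_le_div_iff₀ (one_sub_mul_pos_of_mem_Ioo ha hb) (one_sub_mul_pos_of_mem_Ioo ha hc)]
  nlinarith [mul_nonneg (sub_nonneg.mpr hbc) haa.le]

lemma neelRho_anti_left {a b c : ℝ} (ha : a ∈ Ioo (-1 : ℝ) 1) (hb : b ∈ Ioo (-1 : ℝ) 1)
    (hc : c ∈ Ioo (-1 : ℝ) 1) (hab : a ≤ b) (hbc : b ≤ c) : neelRho b c ≤ neelRho a c := by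
  have hneg {x : ℝ} (hx : x ∈ Ioo (-1 : ℝ) 1) : -x ∈ Ioo (-1 : ℝ) 1 :=
    ⟨neg_lt_neg hx.2, by linarith [hx.1]⟩
  rw [← neelRho_neg_neg, ← neelRho_neg_neg a, neelRho_comm, neelRho_comm (-a)]
  exact neelRho_mono_right (hneg hc) (hneg hb) (hneg ha) (neg_le_neg hbc) (neg_le_neg hab)

lemma neelRho_le_add_of_le_of_le {a b c : ℝ} (ha : a ∈ Ioo (-1 : ℝ) 1)
    (hb : b ∈ Ioo (-1 : ℝ) 1) (hc : c ∈ Ioo (-1 : ℝ) 1) (hab : a ≤ b) (hbc : b ≤ c) :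
    neelRho a c ≤ neelRho a b + neelRho b c := by
  have hab' := one_sub_mul_pos_of_mem_Ioo ha hb
  have hbc' := one_sub_mul_pos_of_mem_Ioo hb hc
  rw [neelRho_of_le hab, neelRho_of_le hbc, neelRho_of_le (hab.trans hbc),
    div_add_div _ _ hab'.ne' hbc'.ne',
    div_le_div_iff₀ (one_sub_mul_pos_of_mem_Ioo ha hc) (mul_pos hab' hbc')]
  nlinarith [mul_nonneg (mul_nonneg (sub_nonneg.mpr hab) (sub_nonneg.mpr hbc))
    (sub_nonneg.mpr (hab.trans hbc))]

lemma neelRho_triangle {a b c : ℝ} (ha : a ∈ Ioo (-1 : ℝ) 1) (hb : b ∈ Ioo (-1 : ℝ) 1)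
    (hc : c ∈ Ioo (-1 : ℝ) 1) : neelRho a c ≤ neelRho a b + neelRho b c := by
  wlog hac : a ≤ c generalizing a c
  · have hca := this hc ha (le_of_not_ge hac)
    rwa [neelRho_comm c a, neelRho_comm c b, neelRho_comm b a, add_comm] at hca
  rcases le_total b a with hba | hab
  · linarith [neelRho_anti_left hb ha hc hba hac, neelRho_nonneg ha hb]
  rcases le_total b c with hbc | hcb
  · exact neelRho_le_add_of_le_of_le ha hb hc hab hbc
  · linarith [neelRho_mono_right ha hc hb hac hcb, neelRho_nonneg hb hc]

theorem neelRho_is_metric :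
    (∀ b ∈ Set.Ioo (-1 : ℝ) 1, ∀ c ∈ Set.Ioo (-1 : ℝ) 1, 0 ≤ neelRho b c) ∧
    (∀ b ∈ Set.Ioo (-1 : ℝ) 1, ∀ c ∈ Set.Ioo (-1 : ℝ) 1, (neelRho b c = 0 ↔ b = c)) ∧
    (∀ b ∈ Set.Ioo (-1 : ℝ) 1, ∀ c ∈ Set.Ioo (-1 : ℝ) 1, neelRho b c = neelRho c b) ∧
    (∀ a ∈ Set.Ioo (-1 : ℝ) 1, ∀ b ∈ Set.Ioo (-1 : ℝ) 1, ∀ c ∈ Set.Ioo (-1 : ℝ) 1,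
      neelRho a c ≤ neelRho a b + neelRho b c) :=
  ⟨fun _ hb _ hc => neelRho_nonneg hb hc, fun _ hb _ hc => neelRho_eq_zero_iff hb hc,
    fun b _ c _ => neelRho_comm b c, fun _ ha _ hb _ hc => neelRho_triangle ha hb hc⟩
end

section
/- For each b ∈ (-1,1) there is a constant C = C(b) such that |μ_b(b ± r) − log(2 − 2b²) − log(1/r)| ≤ C r for all r ∈ (0, 1 − |b|). -/
/-- The logarithmically rescaled tail profile `μ(x) = log(1 + √(1 - x²)) - log |x|`. -/
noncomputable def neelMu (x : ℝ) : ℝ :=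
  Real.log (1 + Real.sqrt (1 - x ^ 2)) - Real.log |x|

/-- The tail profile of a Néel wall at `b`: `μ_b(x) = μ((x - b)/(1 - b x))`. -/
noncomputable def neelMuAt (b x : ℝ) : ℝ := neelMu ((x - b) / (1 - b * x))

lemma neelMu_neg (x : ℝ) : neelMu (-x) = neelMu x := by
  simp [neelMu, neg_sq, abs_neg]

lemma abs_log_le_two_mul {w : ℝ} (hw : 1/2 ≤ w) : |Real.log w| ≤ 2 * |w - 1| := by
  have hw0 : (0:ℝ) < w := by linarith
  rcases le_or_gt 1 w with h | h
  · rw [abs_of_nonneg (Real.log_nonneg h), abs_of_nonneg (by linarith)]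
    have := Real.log_le_sub_one_of_pos hw0
    linarith
  · rw [abs_of_nonpos (Real.log_nonpos (by linarith) h.le), abs_of_neg (by linarith)]
    have h1 : Real.log w⁻¹ ≤ w⁻¹ - 1 := Real.log_le_sub_one_of_pos (by positivity)
    rw [Real.log_inv] at h1
    have h2 : w⁻¹ - 1 ≤ 2 * (1 - w) := by
      rw [inv_eq_one_div, sub_le_iff_le_add, div_le_iff₀ hw0]
      nlinarith
    linarith

lemma neel_key (b r : ℝ) (hb : |b| < 1) (hr0 : 0 < r) (hr1 : r < 1 - |b|) :
    |neelMu (r / (1 - b ^ 2 - b * r)) - Real.log (2 - 2 * b ^ 2) - Real.log (1 / r)| ≤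
      (1 / (1 - |b|) + 2 / (1 - b ^ 2)) * r := by
  have ha0 : 0 ≤ |b| := abs_nonneg b
  have hb2 : b ^ 2 = |b| ^ 2 := (sq_abs b).symm
  have hb1 : b ^ 2 < 1 := by nlinarith
  have h1b : 0 < 1 - b ^ 2 := by linarith
  have hbr : b * r ≤ |b| * r := by
    calc b * r ≤ |b * r| := le_abs_self _
    _ = |b| * r := by rw [abs_mul, abs_of_pos hr0]
  set d := 1 - b ^ 2 - b * r with hd
  have hd1 : 1 - |b| ≤ d := by
    nlinarith [mul_nonneg ha0 (show (0:ℝ) ≤ 1 - |b| - r by linarith)]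
  have hd0 : 0 < d := by linarith
  set t := r / d with htdef
  have ht0 : 0 < t := div_pos hr0 hd0
  have ht1 : t < 1 := by
    rw [htdef, div_lt_one hd0]
    nlinarith [mul_pos (show (0:ℝ) < 1 - |b| - r by linarith) (show (0:ℝ) < 1 + |b| by linarith)]
  set s := Real.sqrt (1 - t ^ 2) with hs
  have hs0 : 0 ≤ s := Real.sqrt_nonneg _
  have hs2 : s ^ 2 = 1 - t ^ 2 := Real.sq_sqrt (by nlinarith)
  have hs1 : s ≤ 1 := by nlinarith [sq_nonneg (s - 1)]
  have h1s : 1 - s ≤ t ^ 2 := by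
    nlinarith [mul_nonneg hs0 (show (0:ℝ) ≤ 1 - s by linarith)]
  have hE : neelMu t - Real.log (2 - 2 * b ^ 2) - Real.log (1 / r)
      = Real.log ((1 + s) / 2) + Real.log (d / (1 - b ^ 2)) := by
    rw [neelMu, abs_of_pos ht0, htdef, Real.log_div hr0.ne' hd0.ne',
      Real.log_div (by positivity) two_ne_zero, Real.log_div hd0.ne' h1b.ne',
      one_div, Real.log_inv,
      show (2 - 2 * b ^ 2) = 2 * (1 - b ^ 2) by ring,
      Real.log_mul two_ne_zero h1b.ne']
    ring
  have hA : |Real.log ((1 + s) / 2)| ≤ t ^ 2 := by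
    have h := abs_log_le_two_mul (w := (1 + s) / 2) (by linarith)
    have habs : |(1 + s) / 2 - 1| = (1 - s) / 2 := by
      rw [abs_of_nonpos (by linarith)]; ring
    rw [habs] at h
    linarith
  have hB : |Real.log (d / (1 - b ^ 2))| ≤ 2 * (|b| * r) / (1 - b ^ 2) := by
    have hw : 1/2 ≤ d / (1 - b ^ 2) := by
      rw [le_div_iff₀ h1b]
      nlinarith [mul_le_mul_of_nonneg_left hr1.le ha0]
    have h := abs_log_le_two_mul hw
    have heq : d / (1 - b ^ 2) - 1 = -(b * r) / (1 - b ^ 2) := by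
      field_simp
      rw [hd]; ring
    rw [heq, abs_div, abs_neg, abs_mul, abs_of_pos hr0, abs_of_pos h1b] at h
    calc |Real.log (d / (1 - b ^ 2))| ≤ 2 * (|b| * r / (1 - b ^ 2)) := h
    _ = 2 * (|b| * r) / (1 - b ^ 2) := by ring
  have htr : t ≤ r / (1 - |b|) :=
    div_le_div_of_nonneg_left hr0.le (by linarith) hd1
  have ht2 : t ^ 2 ≤ r / (1 - |b|) := by nlinarith
  have hBr : 2 * (|b| * r) / (1 - b ^ 2) ≤ 2 * r / (1 - b ^ 2) := by
    gcongr
    nlinarith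
  have hring : (1 / (1 - |b|) + 2 / (1 - b ^ 2)) * r
      = r / (1 - |b|) + 2 * r / (1 - b ^ 2) := by ring
  rw [hE, hring]
  calc |Real.log ((1 + s) / 2) + Real.log (d / (1 - b ^ 2))|
      ≤ |Real.log ((1 + s) / 2)| + |Real.log (d / (1 - b ^ 2))| := abs_add_le _ _
    _ ≤ r / (1 - |b|) + 2 * r / (1 - b ^ 2) := by linarith

theorem neelMuAt_near_wall (b : ℝ) (hb : b ∈ Set.Ioo (-1 : ℝ) 1) :
    ∃ C : ℝ, 0 < C ∧ ∀ r ∈ Set.Ioo 0 (1 - |b|),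
      |neelMuAt b (b + r) - Real.log (2 - 2 * b ^ 2) - Real.log (1 / r)| ≤ C * r ∧
      |neelMuAt b (b - r) - Real.log (2 - 2 * b ^ 2) - Real.log (1 / r)| ≤ C * r := by
  obtain ⟨hbl, hbu⟩ := hb
  have ha1 : |b| < 1 := abs_lt.mpr ⟨hbl, hbu⟩
  have h1a : (0:ℝ) < 1 - |b| := by linarith
  have h1b : (0:ℝ) < 1 - b ^ 2 := by nlinarith [sq_abs b, abs_nonneg b]
  refine ⟨1 / (1 - |b|) + 2 / (1 - b ^ 2),
    add_pos (div_pos one_pos h1a) (div_pos two_pos h1b), ?_⟩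
  intro r hr
  obtain ⟨hr0, hr1⟩ := hr
  constructor
  · have e1 : neelMuAt b (b + r) = neelMu (r / (1 - b ^ 2 - b * r)) := by
      rw [neelMuAt, show b + r - b = r by ring,
        show (1:ℝ) - b * (b + r) = 1 - b ^ 2 - b * r by ring]
    rw [e1]
    exact neel_key b r ha1 hr0 hr1
  · have e2 : neelMuAt b (b - r) = neelMu (r / (1 - (-b) ^ 2 - (-b) * r)) := by
      rw [neelMuAt, show b - r - b = -r by ring,
        show (1:ℝ) - b * (b - r) = 1 - (-b) ^ 2 - (-b) * r by ring,
        show -r / (1 - (-b) ^ 2 - (-b) * r) = -(r / (1 - (-b) ^ 2 - (-b) * r)) by ring,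
        neelMu_neg]
    rw [e2]
    have h := neel_key (-b) r (by rwa [abs_neg]) hr0 (by rwa [abs_neg])
    simpa [neg_sq, abs_neg] using h
end

section
/- Let s > 0 and let μ ∈ W^{1,2}(-s,s) satisfy μ(0) = 1 and |μ| ≤ 1 on (-s,s). Then ∫_{-s}^{s} |μ'| dx ≤ 2s ∫_{-s}^{s} (μ')²/(1 − μ²) dx. -/
/-!
Put `g = 1 - μ²`. Away from the countable set of points where `μ = ±1` and `μ' ≠ 0`, AM-GM gives
`|μ'| ≤ s μ'²/g + g/(4s)`. On the other hand `g ≤ 2 (1 - μ) = 2 (μ 0 - μ x)`, which the fundamental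
theorem of calculus bounds by `2 ∫ |μ'|` over the half of `(-s, s)` containing `x`; integrating over
both halves gives `∫ g ≤ 2s ∫ |μ'|`. Hence `∫ |μ'| ≤ s ∫ μ'²/g + ½ ∫ |μ'|`.
-/

open MeasureTheory Set Filter Interval

theorem countable_setOf_eq_and_deriv_ne {f f' : ℝ → ℝ} {U : Set ℝ}
    (hf : ∀ x ∈ U, HasDerivAt f (f' x) x) (c : ℝ) :
    {x | x ∈ U ∧ f x = c ∧ f' x ≠ 0}.Countable := by
  refine (HereditarilyLindelofSpace.isLindelof _).countable_of_isDiscrete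
    (isDiscrete_iff_nhdsNE.2 fun x ⟨hxU, _, hx'⟩ => ?_)
  rw [inf_principal_eq_bot]
  filter_upwards [(hf x hxU).eventually_ne (c := c) hx'] with y hy hyE using hy hyE.2.1

theorem ae_deriv_eq_zero_of_mem_countable {m : Measure ℝ} [NullSingletonClass m] {f f' : ℝ → ℝ}
    {U C : Set ℝ} (hf : ∀ x ∈ U, HasDerivAt f (f' x) x) (hC : C.Countable) :
    ∀ᵐ x ∂m, x ∈ U → f x ∈ C → f' x = 0 := by
  have hlevel (c : ℝ) : ∀ᵐ x ∂m, x ∈ U → f x = c → f' x = 0 := by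
    filter_upwards [measure_eq_zero_iff_ae_notMem.1
      ((countable_setOf_eq_and_deriv_ne hf c).measure_zero m)] with x hx hxU hfx
    by_contra h
    exact hx ⟨hxU, hfx, h⟩
  filter_upwards [(ae_ball_iff hC).2 fun c _ => hlevel c] with x hx hxU hfx
    using hx (f x) hfx hxU rfl

theorem norm_sub_le_integral_uIoc_norm_deriv {E : Type*} [NormedAddCommGroup E] [NormedSpace ℝ E]
    [CompleteSpace E] {f f' : ℝ → E} {a b : ℝ}
    (hf : ∀ x ∈ uIcc a b, HasDerivAt f (f' x) x) (hf' : IntegrableOn f' (Ι a b)) :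
    ‖f b - f a‖ ≤ ∫ x in Ι a b, ‖f' x‖ := by
  rw [← intervalIntegral.integral_eq_sub_of_hasDerivAt hf (intervalIntegrable_iff.2 hf'),
    intervalIntegral.norm_integral_eq_norm_integral_uIoc]
  exact norm_integral_le_integral_norm f'

theorem abs_le_mul_sq_div_add_div {a g t : ℝ} (ht : 0 < t) (hg : 0 ≤ g) (ha : g = 0 → a = 0) :
    |a| ≤ t * (a ^ 2 / g) + g / (4 * t) := by
  rcases hg.eq_or_lt with rfl | hg
  · simp [ha rfl]
  -- AM-GM: the difference of the two sides is `(2 t |a| - g)² / (4 t g)`.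
  rw [← sq_abs a, mul_div_assoc', div_add_div _ _ hg.ne' (by positivity),
    le_div_iff₀ (by positivity)]
  nlinarith [sq_nonneg (2 * t * |a| - g)]

theorem integrableOn_Ioo_one_sub_sq {μ : ℝ → ℝ} {a b : ℝ} (hμ : ContinuousOn μ (Ioo a b))
    (hbound : ∀ x ∈ Ioo a b, |μ x| ≤ 1) :
    IntegrableOn (fun x => 1 - μ x ^ 2) (Ioo a b) := by
  refine Integrable.of_bound
    ((continuousOn_const.sub (hμ.pow 2)).aestronglyMeasurable measurableSet_Ioo) 1 ?_
  filter_upwards [ae_restrict_mem measurableSet_Ioo] with x hx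
  have := abs_le.1 (hbound x hx)
  rw [Real.norm_of_nonneg (by nlinarith)]
  nlinarith

section OneSubSq

variable {μ μ' : ℝ → ℝ}

theorem setIntegral_one_sub_sq_le {J : Set ℝ} {c : ℝ}
    (hJ : ∀ x ∈ J, Ι c x ⊆ J) (hderiv : ∀ x ∈ insert c J, HasDerivAt μ (μ' x) x)
    (hc : μ c = 1) (hbound : ∀ x ∈ J, |μ x| ≤ 1) (hint : IntegrableOn μ' J)
    (hJ_fin : volume J < ⊤) :
    ∫ x in J, (1 - μ x ^ 2) ≤ 2 * volume.real J * ∫ x in J, |μ' x| := by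
  have hsegment : ∀ x ∈ J, uIcc c x ⊆ insert c J := by
    intro x hx t ht
    rcases eq_or_ne t c with rfl | htc
    · exact mem_insert _ _
    rcases eq_or_ne t x with rfl | htx
    · exact mem_insert_of_mem _ hx
    refine mem_insert_of_mem _ (hJ x hx ?_)
    rw [mem_uIcc] at ht
    rw [mem_uIoc]
    grind
  have hpointwise : ∀ x ∈ J, 1 - μ x ^ 2 ≤ 2 * ∫ t in J, |μ' t| := by
    intro x hx
    have hosc : |μ x - μ c| ≤ ∫ t in Ι c x, |μ' t| :=
      norm_sub_le_integral_uIoc_norm_deriv (fun t ht => hderiv t (hsegment x hx ht))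
        (hint.mono_set (hJ x hx))
    have hmono : ∫ t in Ι c x, |μ' t| ≤ ∫ t in J, |μ' t| :=
      setIntegral_mono_set hint.abs (ae_of_all _ fun _ => abs_nonneg _)
        (Eventually.of_forall (hJ x hx))
    rw [hc] at hosc
    nlinarith [abs_le.1 (hbound x hx), neg_le_abs (μ x - 1)]
  calc ∫ x in J, (1 - μ x ^ 2) ≤ ‖∫ x in J, (1 - μ x ^ 2)‖ := Real.le_norm_self _
    _ ≤ (2 * ∫ t in J, |μ' t|) * volume.real J := by
      refine norm_setIntegral_le_of_norm_le_const hJ_fin fun x hx => ?_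
      rw [Real.norm_of_nonneg (by nlinarith [abs_le.1 (hbound x hx)])]
      exact hpointwise x hx
    _ = 2 * volume.real J * ∫ x in J, |μ' x| := by ring

theorem setIntegral_Ioo_one_sub_sq_le {s : ℝ} (hs : 0 < s)
    (hderiv : ∀ x ∈ Ioo (-s) s, HasDerivAt μ (μ' x) x) (h0 : μ 0 = 1)
    (hbound : ∀ x ∈ Ioo (-s) s, |μ x| ≤ 1) (hint : IntegrableOn μ' (Ioo (-s) s))
    (hg : IntegrableOn (fun x => 1 - μ x ^ 2) (Ioo (-s) s)) :
    ∫ x in Ioo (-s) s, (1 - μ x ^ 2) ≤ 2 * s * ∫ x in Ioo (-s) s, |μ' x| := by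
  have hsplit : Ioo (-s) s = Ioc (-s) 0 ∪ Ioo 0 s :=
    (Ioc_union_Ioo_eq_Ioo (by linarith) hs).symm
  have hdisj : Disjoint (Ioc (-s) 0) (Ioo 0 s) :=
    disjoint_left.2 fun x hx hx' => (not_lt.2 hx.2) hx'.1
  have hleft : Ioc (-s) 0 ⊆ Ioo (-s) s := hsplit ▸ subset_union_left
  have hright : Ioo 0 s ⊆ Ioo (-s) s := hsplit ▸ subset_union_right
  have h0_mem : (0 : ℝ) ∈ Ioo (-s) s := ⟨by linarith, hs⟩
  have hint_abs : IntegrableOn (fun x => |μ' x|) (Ioo (-s) s) := hint.abs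
  have hI_left := setIntegral_one_sub_sq_le (J := Ioc (-s) 0) (c := 0)
    (fun x hx => by rw [uIoc_of_ge hx.2]; exact Ioc_subset_Ioc_left hx.1.le)
    (fun x hx => hderiv x (insert_subset h0_mem hleft hx)) h0 (fun x hx => hbound x (hleft hx))
    (hint.mono_set hleft) measure_Ioc_lt_top
  have hI_right := setIntegral_one_sub_sq_le (J := Ioo 0 s) (c := 0)
    (fun x hx => by rw [uIoc_of_le hx.1.le]; exact Ioc_subset_Ioo_right hx.2)
    (fun x hx => hderiv x (insert_subset h0_mem hright hx)) h0 (fun x hx => hbound x (hright hx))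
    (hint.mono_set hright) measure_Ioo_lt_top
  rw [Real.volume_real_Ioc, max_eq_left (by linarith)] at hI_left
  rw [Real.volume_real_Ioo, max_eq_left (by linarith)] at hI_right
  rw [hsplit, setIntegral_union hdisj measurableSet_Ioo (hg.mono_set hleft) (hg.mono_set hright),
    setIntegral_union hdisj measurableSet_Ioo (hint_abs.mono_set hleft)
      (hint_abs.mono_set hright)]
  linarith

end OneSubSq

theorem W11_estimate_general (s : ℝ) (hs : 0 < s) (μ μ' : ℝ → ℝ)
    (hderiv : ∀ x ∈ Set.Ioo (-s) s, HasDerivAt μ (μ' x) x)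
    (h0 : μ 0 = 1) (hbound : ∀ x ∈ Set.Ioo (-s) s, |μ x| ≤ 1)
    (hint : IntegrableOn (fun x => (μ' x) ^ 2 / (1 - (μ x) ^ 2)) (Set.Ioo (-s) s)) :
    ∫ x in Set.Ioo (-s) s, |μ' x| ≤
      2 * s * ∫ x in Set.Ioo (-s) s, (μ' x) ^ 2 / (1 - (μ x) ^ 2) := by
  have hg := integrableOn_Ioo_one_sub_sq (HasDerivAt.continuousOn hderiv) hbound
  have hpointwise : ∀ᵐ x ∂volume.restrict (Ioo (-s) s),
      |μ' x| ≤ s * (μ' x ^ 2 / (1 - μ x ^ 2)) + (1 - μ x ^ 2) / (4 * s) := by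
    filter_upwards [ae_restrict_mem measurableSet_Ioo, ae_restrict_of_ae
      (ae_deriv_eq_zero_of_mem_countable hderiv (countable_insert.2 (countable_singleton (-1))))]
      with x hx hcrit
    have := abs_le.1 (hbound x hx)
    refine abs_le_mul_sq_div_add_div hs (by nlinarith) fun hx_sq => hcrit hx ?_
    exact eq_or_eq_neg_of_sq_eq_sq (μ x) 1 (by linarith)
  have hμ' : IntegrableOn μ' (Ioo (-s) s) :=
    ((hint.const_mul s).add (hg.div_const (4 * s))).mono'
      ((aestronglyMeasurable_deriv μ _).congr
        (ae_restrict_of_forall_mem measurableSet_Ioo fun x hx => (hderiv x hx).deriv))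
      hpointwise
  have hI : ∫ x in Ioo (-s) s, |μ' x| ≤ s * (∫ x in Ioo (-s) s, μ' x ^ 2 / (1 - μ x ^ 2)) +
      (∫ x in Ioo (-s) s, (1 - μ x ^ 2)) / (4 * s) := by
    rw [← integral_const_mul, ← integral_div, ← integral_add (hint.const_mul s) (hg.div_const _)]
    exact integral_mono_ae hμ'.abs ((hint.const_mul s).add (hg.div_const _)) hpointwise
  have hG := setIntegral_Ioo_one_sub_sq_le hs hderiv h0 hbound hμ' hg
  have : (∫ x in Ioo (-s) s, (1 - μ x ^ 2)) / (4 * s) ≤ (∫ x in Ioo (-s) s, |μ' x|) / 2 := by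
    rw [div_le_iff₀ (by positivity)]
    linarith
  linarith

theorem W11_estimate (s : ℝ) (hs : 0 < s) (μ μ' : ℝ → ℝ)
    (hcont : ContinuousOn μ (Set.Icc (-s) s))
    (hderiv : ∀ x ∈ Set.Ioo (-s) s, HasDerivAt μ (μ' x) x)
    (h0 : μ 0 = 1) (hbound : ∀ x ∈ Set.Ioo (-s) s, |μ x| ≤ 1)
    (hint : IntegrableOn (fun x => (μ' x) ^ 2 / (1 - (μ x) ^ 2)) (Set.Ioo (-s) s)) :
    ∫ x in Set.Ioo (-s) s, |μ' x| ≤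
      2 * s * ∫ x in Set.Ioo (-s) s, (μ' x) ^ 2 / (1 - (μ x) ^ 2) :=
  W11_estimate_general s hs μ μ' hderiv h0 hbound hint
end

section
/- Under the hypotheses μ ∈ W^{1,2}(-s,s), μ(0) = 1, |μ| ≤ 1, one has the intermediate bound ∫_{-s}^{s} (1 − μ²) dx ≤ 4s² ∫_{-s}^{s} (μ')²/(1 − μ²) dx. -/
open MeasureTheory Set Interval Filter Topology

/-!
Write `F = μ'² / (1 - μ²)`. Where `|μ| < 1`, the function `√(1 - μ)` has squared derivative
`μ'² / (4 (1 - μ)) ≤ F / 2`, and where `|μ| = 1` the point is an extremum of `μ`, so `μ' = 0`.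
By Cauchy–Schwarz along `[0, x]`, starting from `1 - μ 0 = 0`, this gives
`1 - μ x ≤ |x| / 2 * ∫ F` (regularising `√(1 - μ)` to `√(1 - μ + ε)` and letting `ε → 0`).
Hence `1 - μ² ≤ 2 (1 - μ) ≤ s ∫ F` pointwise, and integrating over `(-s, s)` concludes.
-/

theorem sq_integral_le_measureReal_univ_mul_integral_sq {α : Type*} [MeasurableSpace α]
    {ν : Measure α} [IsFiniteMeasure ν] {f : α → ℝ} (hf : MemLp f 2 ν) :
    (∫ x, f x ∂ν) ^ 2 ≤ ν.real univ * ∫ x, f x ^ 2 ∂ν := by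
  have hf1 : Integrable f ν := hf.integrable one_le_two
  have hf2 : Integrable (fun x => f x ^ 2) ν := (memLp_two_iff_integrable_sq hf.1).1 hf
  have hquad : ∀ c : ℝ,
      0 ≤ ν.real univ * (c * c) + (-2 * ∫ x, f x ∂ν) * c + ∫ x, f x ^ 2 ∂ν := by
    intro c
    have hexp : ∀ x, (f x - c) ^ 2 = f x ^ 2 - c * 2 * f x + c * c := fun x => by ring
    have hsq_nonneg : 0 ≤ ∫ x, (f x - c) ^ 2 ∂ν := integral_nonneg fun x => sq_nonneg _
    simp only [hexp] at hsq_nonneg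
    rw [integral_add (f := fun x => f x ^ 2 - c * 2 * f x) (hf2.sub (hf1.const_mul _))
      (integrable_const _), integral_sub hf2 (hf1.const_mul _), integral_const_mul,
      integral_const, smul_eq_mul] at hsq_nonneg
    linarith
  have hdiscrim := discrim_le_zero hquad
  rw [discrim] at hdiscrim
  nlinarith

theorem sq_sub_le_abs_mul_integral_of_sq_deriv_le {g g' G : ℝ → ℝ} {a b : ℝ}
    (hg : ∀ t ∈ uIcc a b, HasDerivAt g (g' t) t) (hG : IntegrableOn G (Ι a b))
    (hg'G : ∀ t ∈ Ι a b, g' t ^ 2 ≤ G t) :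
    (g b - g a) ^ 2 ≤ |b - a| * ∫ t in Ι a b, G t := by
  have hmeas : AEStronglyMeasurable g' (volume.restrict (Ι a b)) :=
    (measurable_deriv g).aestronglyMeasurable.congr <| by
      filter_upwards [ae_restrict_mem measurableSet_uIoc] with t ht
      exact (hg t (uIoc_subset_uIcc ht)).deriv
  have hsq : IntegrableOn (fun t => g' t ^ 2) (Ι a b) :=
    hG.mono' (hmeas.pow 2) <| by
      filter_upwards [ae_restrict_mem measurableSet_uIoc] with t ht
      rw [Real.norm_of_nonneg (sq_nonneg _)]
      exact hg'G t ht
  have : IsFiniteMeasure (volume.restrict (Ι a b)) :=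
    isFiniteMeasure_restrict.2 (by simp [Real.volume_uIoc])
  have hL2 : MemLp g' 2 (volume.restrict (Ι a b)) := (memLp_two_iff_integrable_sq hmeas).2 hsq
  have hftc : ∫ t in a..b, g' t = g b - g a :=
    intervalIntegral.integral_eq_sub_of_hasDerivAt hg
      (intervalIntegrable_iff.2 (hL2.integrable one_le_two))
  calc (g b - g a) ^ 2 = (∫ t in Ι a b, g' t) ^ 2 := by
        rw [← hftc, ← sq_abs, ← Real.norm_eq_abs,
          intervalIntegral.norm_integral_eq_norm_integral_uIoc, Real.norm_eq_abs, sq_abs]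
    _ ≤ (volume.restrict (Ι a b)).real univ * ∫ t in Ι a b, g' t ^ 2 :=
        sq_integral_le_measureReal_univ_mul_integral_sq hL2
    _ ≤ |b - a| * ∫ t in Ι a b, G t := by
        rw [measureReal_restrict_apply_univ, measureReal_def, Real.volume_uIoc,
          ENNReal.toReal_ofReal (abs_nonneg _)]
        exact mul_le_mul_of_nonneg_left (setIntegral_mono_on hsq hG measurableSet_uIoc hg'G)
          (abs_nonneg _)

theorem HasDerivAt.eq_zero_of_sq_eq_one {f : ℝ → ℝ} {f' x : ℝ} (hf : HasDerivAt f f' x)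
    (hle : ∀ᶠ y in 𝓝 x, |f y| ≤ 1) (hx : f x ^ 2 = 1) : f' = 0 := by
  rcases sq_eq_one_iff.1 hx with hx | hx
  · exact IsLocalMax.hasDerivAt_eq_zero (hle.mono fun y hy => hx ▸ (abs_le.1 hy).2) hf
  · exact IsLocalMin.hasDerivAt_eq_zero (hle.mono fun y hy => hx ▸ (abs_le.1 hy).1) hf

theorem sq_div_two_sqrt_one_sub_add_le {m d ε : ℝ} (hm : |m| ≤ 1) (hε : 0 < ε)
    (hd : m ^ 2 = 1 → d = 0) : (d / (2 * √(1 - m + ε))) ^ 2 ≤ d ^ 2 / (1 - m ^ 2) / 2 := by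
  obtain ⟨hm₁, hm₂⟩ := abs_le.1 hm
  -- at `m ^ 2 = 1` the right-hand side is `d ^ 2 / 0 / 2 = 0`
  rcases (sub_nonneg.2 (sq_le_one_iff_abs_le_one m |>.2 hm)).eq_or_lt with h | h
  · simp [hd (by linarith)]
  · rw [div_pow, mul_pow, Real.sq_sqrt (by linarith), div_div]
    exact div_le_div_of_nonneg_left (sq_nonneg d) (by positivity) (by nlinarith)

theorem le_of_forall_sq_sqrt_add_sub_sqrt_le {u C : ℝ} (hu : 0 ≤ u)
    (h : ∀ ε > 0, (√(u + ε) - √ε) ^ 2 ≤ C) : u ≤ C := by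
  have hcont : Continuous fun ε => (√(u + ε) - √ε) ^ 2 := by fun_prop
  have := le_of_tendsto (x := 𝓝[>] 0) ((hcont.tendsto 0).mono_left nhdsWithin_le_nhds)
    (eventually_nhdsWithin_of_forall h)
  simpa [hu] using this

theorem one_sub_le_abs_sub_mul_integral {μ μ' : ℝ → ℝ} {a b x₀ x : ℝ}
    (hderiv : ∀ x ∈ Ioo a b, HasDerivAt μ (μ' x) x) (hbound : ∀ x ∈ Ioo a b, |μ x| ≤ 1)
    (hint : IntegrableOn (fun x => μ' x ^ 2 / (1 - μ x ^ 2)) (Ioo a b))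
    (hx₀ : x₀ ∈ Ioo a b) (h₀ : μ x₀ = 1) (hx : x ∈ Ioo a b) :
    1 - μ x ≤ |x - x₀| / 2 * ∫ t in Ioo a b, μ' t ^ 2 / (1 - μ t ^ 2) := by
  have hsub : [[x₀, x]] ⊆ Ioo a b := ordConnected_Ioo.uIcc_subset hx₀ hx
  refine le_of_forall_sq_sqrt_add_sub_sqrt_le (by linarith [(abs_le.1 (hbound x hx)).2])
    fun ε hε => ?_
  have hpos : ∀ t ∈ Ioo a b, 0 < 1 - μ t + ε := fun t ht => by
    linarith [(abs_le.1 (hbound t ht)).2]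
  have hg : ∀ t ∈ [[x₀, x]], HasDerivAt (fun t => √(1 - μ t + ε))
      (-μ' t / (2 * √(1 - μ t + ε))) t := fun t ht =>
    (((hderiv t (hsub ht)).const_sub 1).add_const ε).sqrt (hpos t (hsub ht)).ne'
  have hg' : ∀ t ∈ Ι x₀ x,
      (-μ' t / (2 * √(1 - μ t + ε))) ^ 2 ≤ μ' t ^ 2 / (1 - μ t ^ 2) / 2 := by
    intro t ht
    have htab := hsub (uIoc_subset_uIcc ht)
    rw [← neg_sq (μ' t)]
    refine sq_div_two_sqrt_one_sub_add_le (hbound t htab) hε fun h => ?_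
    rw [(hderiv t htab).eq_zero_of_sq_eq_one ?_ h, neg_zero]
    filter_upwards [isOpen_Ioo.mem_nhds htab] using hbound
  have hF : ∫ t in Ι x₀ x, μ' t ^ 2 / (1 - μ t ^ 2) ≤
      ∫ t in Ioo a b, μ' t ^ 2 / (1 - μ t ^ 2) :=
    setIntegral_mono_set hint (ae_restrict_of_forall_mem measurableSet_Ioo fun t ht =>
      div_nonneg (sq_nonneg _) (sub_nonneg.2 ((sq_le_one_iff_abs_le_one _).2 (hbound t ht))))
      (uIoc_subset_uIcc.trans hsub).eventuallyLE
  calc (√(1 - μ x + ε) - √ε) ^ 2 = (√(1 - μ x + ε) - √(1 - μ x₀ + ε)) ^ 2 := by simp [h₀]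
    _ ≤ |x - x₀| * ∫ t in Ι x₀ x, μ' t ^ 2 / (1 - μ t ^ 2) / 2 :=
        sq_sub_le_abs_mul_integral_of_sq_deriv_le hg
          ((hint.mono_set (uIoc_subset_uIcc.trans hsub)).div_const 2) hg'
    _ ≤ |x - x₀| / 2 * ∫ t in Ioo a b, μ' t ^ 2 / (1 - μ t ^ 2) := by
        rw [integral_div]
        linarith [mul_le_mul_of_nonneg_left hF (abs_nonneg (x - x₀))]

theorem one_sub_sq_estimate_general (s : ℝ) (hs : 0 < s) (μ μ' : ℝ → ℝ)
    (hderiv : ∀ x ∈ Set.Ioo (-s) s, HasDerivAt μ (μ' x) x)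
    (h0 : μ 0 = 1) (hbound : ∀ x ∈ Set.Ioo (-s) s, |μ x| ≤ 1)
    (hint : IntegrableOn (fun x => (μ' x) ^ 2 / (1 - (μ x) ^ 2)) (Set.Ioo (-s) s)) :
    ∫ x in Set.Ioo (-s) s, (1 - (μ x) ^ 2) ≤
      4 * s ^ 2 * ∫ x in Set.Ioo (-s) s, (μ' x) ^ 2 / (1 - (μ x) ^ 2) := by
  set I := ∫ x in Ioo (-s) s, μ' x ^ 2 / (1 - μ x ^ 2)
  have hμsq : ∀ x ∈ Ioo (-s) s, 0 ≤ 1 - μ x ^ 2 := fun x hx =>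
    sub_nonneg.2 ((sq_le_one_iff_abs_le_one _).2 (hbound x hx))
  have hI : 0 ≤ I := setIntegral_nonneg measurableSet_Ioo fun x hx =>
    div_nonneg (sq_nonneg _) (hμsq x hx)
  have hpointwise : ∀ x ∈ Ioo (-s) s, 1 - μ x ^ 2 ≤ s * I := fun x hx => by
    have h := one_sub_le_abs_sub_mul_integral hderiv hbound hint ⟨by linarith, hs⟩ h0 hx
    rw [sub_zero] at h
    calc 1 - μ x ^ 2 ≤ 2 * (1 - μ x) := by nlinarith [abs_le.1 (hbound x hx)]
      _ ≤ |x| * I := by linarith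
      _ ≤ s * I := mul_le_mul_of_nonneg_right (abs_le.2 ⟨hx.1.le, hx.2.le⟩) hI
  calc ∫ x in Ioo (-s) s, (1 - μ x ^ 2) ≤ ∫ _ in Ioo (-s) s, s * I :=
        integral_mono_of_nonneg (ae_restrict_of_forall_mem measurableSet_Ioo hμsq)
          (integrableOn_const measure_Ioo_lt_top.ne)
          (ae_restrict_of_forall_mem measurableSet_Ioo hpointwise)
    _ = 2 * s * (s * I) := by
        rw [setIntegral_const, Real.volume_real_Ioo_of_le (by linarith), smul_eq_mul]
        ring
    _ ≤ 4 * s ^ 2 * I := by nlinarith [mul_nonneg (sq_nonneg s) hI]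

theorem one_sub_sq_estimate (s : ℝ) (hs : 0 < s) (μ μ' : ℝ → ℝ)
    (hcont : ContinuousOn μ (Set.Icc (-s) s))
    (hderiv : ∀ x ∈ Set.Ioo (-s) s, HasDerivAt μ (μ' x) x)
    (h0 : μ 0 = 1) (hbound : ∀ x ∈ Set.Ioo (-s) s, |μ x| ≤ 1)
    (hint : IntegrableOn (fun x => (μ' x) ^ 2 / (1 - (μ x) ^ 2)) (Set.Ioo (-s) s)) :
    ∫ x in Set.Ioo (-s) s, (1 - (μ x) ^ 2) ≤
      4 * s ^ 2 * ∫ x in Set.Ioo (-s) s, (μ' x) ^ 2 / (1 - (μ x) ^ 2) :=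
  one_sub_sq_estimate_general s hs μ μ' hderiv h0 hbound hint
end

section
/- Let δ ∈ (0,1), γ > 0, and define ξ on the upper half disc B₁⁺(0) in polar coordinates by ξ(r cosθ, r sinθ) = γ(θ − π/2)/log(1/δ) for r ≥ δ and ξ(r cosθ, r sinθ) = γ r (θ − π/2)/(δ log(1/δ)) for 0 < r < δ. Then ∫_{B₁⁺(0)} |∇ξ|² dx = πγ²/log(1/δ) + (πγ²/(log(1/δ))²)(1/2 + π²/24). -/
/-!
Write `ξ = F (r, θ)` in polar coordinates. On the upper half-plane `∇r = x / r` and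
`∇θ = (-x₂, x₁) / r²` are orthogonal of lengths `1` and `1 / r`, so
`|∇ξ|² = (∂_r F)² + (∂_θ F)² / r²` away from the null circle `r = δ`. The change of variables
`dx = r dr dθ` turns the energy over `B₁⁺` into an integral over `(0, 1) × (0, π)`, which splits at
`r = δ` into two product integrals (with `L = log (1 / δ)`): `∫ (γ / L)² / r` produces the
logarithm, and `∫ r (γ / (δ L))² (1 + (θ - π / 2)²)` produces `(1 / 2) (1 + π² / 12)`.
-/

open MeasureTheory Real Set

theorem hasFDerivAt_norm_of_ne_zero {F : Type*} [NormedAddCommGroup F] [InnerProductSpace ℝ F]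
    {x : F} (hx : x ≠ 0) : HasFDerivAt (‖·‖) (‖x‖⁻¹ • innerSL ℝ x) x := by
  have h := (hasDerivAt_sqrt (pow_ne_zero 2 (norm_ne_zero_iff.2 hx))).comp_hasFDerivAt x
    (hasStrictFDerivAt_norm_sq x).hasFDerivAt
  simp only [Function.comp_def, sqrt_sq (norm_nonneg _)] at h
  refine h.congr_fderiv (ContinuousLinearMap.ext fun y => ?_)
  simp only [smul_apply, innerSL_apply_apply, smul_eq_mul, nsmul_eq_mul]
  field_simp
  norm_num

namespace EuclideanSpace

theorem norm_sq_fin_two (x : EuclideanSpace ℝ (Fin 2)) : ‖x‖ ^ 2 = x 0 ^ 2 + x 1 ^ 2 := by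
  simp [real_norm_sq_eq, Fin.sum_univ_two]

theorem inner_fin_two (v x : EuclideanSpace ℝ (Fin 2)) :
    inner ℝ v x = v 0 * x 0 + v 1 * x 1 := by
  simp [PiLp.inner_apply, Fin.sum_univ_two, mul_comm]

theorem norm_pos_of_pos_one {x : EuclideanSpace ℝ (Fin 2)} (hx : 0 < x 1) : 0 < ‖x‖ :=
  norm_pos_iff.2 fun h => by simp [h] at hx

/-- The polar angle of `x`, for `x` in the closed upper half-plane. -/
noncomputable def polarAngle (x : EuclideanSpace ℝ (Fin 2)) : ℝ := arccos (x 0 / ‖x‖)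

theorem hasFDerivAt_polarAngle {x : EuclideanSpace ℝ (Fin 2)} (hx : 0 < x 1) :
    HasFDerivAt polarAngle (innerSL ℝ ((‖x‖ ^ 2)⁻¹ • !₂[-x 1, x 0])) x := by
  have hr : 0 < ‖x‖ := norm_pos_of_pos_one hx
  have hsq := norm_sq_fin_two x
  have hsin : √(1 - (x 0 / ‖x‖) ^ 2) = x 1 / ‖x‖ := by
    rw [← sqrt_sq (div_pos hx hr).le]
    congr 1
    field_simp
    linarith
  have hcos : |x 0 / ‖x‖| < 1 := by
    rw [abs_lt, lt_div_iff₀ hr, div_lt_iff₀ hr]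
    constructor <;> nlinarith
  have hquot : HasFDerivAt (fun y : EuclideanSpace ℝ (Fin 2) => y 0 / ‖y‖)
      (x 0 • (-(‖x‖ ^ 2)⁻¹ • ‖x‖⁻¹ • innerSL ℝ x) + ‖x‖⁻¹ • proj (0 : Fin 2)) x := by
    simp only [div_eq_mul_inv]
    exact (proj (0 : Fin 2)).hasFDerivAt.mul
      ((hasDerivAt_inv hr.ne').comp_hasFDerivAt x
        (hasFDerivAt_norm_of_ne_zero (norm_pos_iff.1 hr)))
  obtain ⟨hcos_gt, hcos_lt⟩ := abs_lt.1 hcos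
  refine ((hasDerivAt_arccos hcos_gt.ne' hcos_lt.ne).comp_hasFDerivAt x hquot).congr_fderiv
    (ContinuousLinearMap.ext fun y => ?_)
  simp only [smul_apply, add_apply, innerSL_apply_apply, smul_eq_mul, inner_fin_two, hsin,
    PiLp.smul_apply, PiLp.proj_apply, Matrix.cons_val_zero, Matrix.cons_val_one]
  field_simp
  linear_combination -y 0 * hsq

theorem hasFDerivAt_comp_norm_polarAngle {F : ℝ × ℝ → ℝ} {a b : ℝ}
    {x : EuclideanSpace ℝ (Fin 2)} (hx : 0 < x 1)
    (hF : HasFDerivAt F (a • ContinuousLinearMap.fst ℝ ℝ ℝ + b • ContinuousLinearMap.snd ℝ ℝ ℝ)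
      (‖x‖, polarAngle x)) :
    HasFDerivAt (fun y => F (‖y‖, polarAngle y))
      (innerSL ℝ ((a / ‖x‖) • x + (b / ‖x‖ ^ 2) • !₂[-x 1, x 0])) x := by
  have hr := norm_pos_of_pos_one hx
  refine (hF.comp x ((hasFDerivAt_norm_of_ne_zero (norm_pos_iff.1 hr)).prodMk
    (hasFDerivAt_polarAngle hx))).congr_fderiv (ContinuousLinearMap.ext fun y => ?_)
  simp only [ContinuousLinearMap.comp_apply, ContinuousLinearMap.prod_apply, add_apply, smul_apply,
    ContinuousLinearMap.coe_fst', ContinuousLinearMap.coe_snd', innerSL_apply_apply, smul_eq_mul,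
    inner_add_left, real_inner_smul_left]
  field_simp

theorem sq_norm_fderiv_comp_norm_polarAngle {F : ℝ × ℝ → ℝ} {a b : ℝ}
    {x : EuclideanSpace ℝ (Fin 2)} (hx : 0 < x 1)
    (hF : HasFDerivAt F (a • ContinuousLinearMap.fst ℝ ℝ ℝ + b • ContinuousLinearMap.snd ℝ ℝ ℝ)
      (‖x‖, polarAngle x)) :
    ‖fderiv ℝ (fun y => F (‖y‖, polarAngle y)) x‖ ^ 2 = a ^ 2 + (b / ‖x‖) ^ 2 := by
  have hr := norm_pos_of_pos_one hx
  have hsq := norm_sq_fin_two x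
  rw [(hasFDerivAt_comp_norm_polarAngle hx hF).fderiv, innerSL_apply_norm, norm_sq_fin_two]
  simp only [PiLp.add_apply, PiLp.smul_apply, smul_eq_mul, Matrix.cons_val_zero,
    Matrix.cons_val_one]
  field_simp
  linear_combination -(a ^ 2 * ‖x‖ ^ 2 + b ^ 2) * hsq

def upperHalfBall (R : ℝ) : Set (EuclideanSpace ℝ (Fin 2)) := {x | ‖x‖ < R ∧ 0 < x 1}

theorem measurableSet_upperHalfBall (R : ℝ) : MeasurableSet (upperHalfBall R) :=
  (measurableSet_lt measurable_norm measurable_const).inter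
    (measurableSet_lt measurable_const
      ((continuous_apply 1).comp (PiLp.continuous_ofLp 2 _)).measurable)

theorem norm_mul_cos_mul_sin (r t : ℝ) (hr : 0 ≤ r) : ‖!₂[r * cos t, r * sin t]‖ = r := by
  rw [← sq_eq_sq₀ (norm_nonneg _) hr, norm_sq_fin_two]
  simp only [Matrix.cons_val_zero, Matrix.cons_val_one]
  linear_combination r ^ 2 * cos_sq_add_sin_sq t

theorem setIntegral_upperHalfBall_eq_polar {E : Type*} [NormedAddCommGroup E] [NormedSpace ℝ E]
    (R : ℝ) (g : ℝ × ℝ → E) :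
    ∫ x in upperHalfBall R, g (‖x‖, polarAngle x) = ∫ p in Ioo 0 R ×ˢ Ioo 0 π, p.1 • g p := by
  let T : EuclideanSpace ℝ (Fin 2) ≃ᵐ ℝ × ℝ :=
    (MeasurableEquiv.toLp 2 (Fin 2 → ℝ)).symm.trans MeasurableEquiv.finTwoArrow
  have hT : MeasurePreserving T := (volume_preserving_finTwoArrow ℝ).comp
    (volume_preserving_symm_measurableEquiv_toLp (Fin 2))
  have hpolar : EqOn
      (fun p => p.1 • (T.symm ⁻¹' upperHalfBall R).indicator
        (fun q => g (‖T.symm q‖, polarAngle (T.symm q))) (polarCoord.symm p))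
      ((Ioo 0 R ×ˢ Ioo 0 π).indicator fun p => p.1 • g p) polarCoord.target := by
    rintro ⟨r, t⟩ ⟨hr, ht⟩
    have hpt : T.symm (polarCoord.symm (r, t)) = !₂[r * cos t, r * sin t] := rfl
    have hnorm := norm_mul_cos_mul_sin r t hr.le
    have hupper : 0 < r * sin t ↔ 0 < t := by
      rw [mul_pos_iff_of_pos_left hr]
      exact ⟨fun h => lt_of_not_ge fun h' =>
          h.not_ge (sin_nonpos_of_nonpos_of_neg_pi_le h' ht.1.le),
        fun h => sin_pos_of_pos_of_lt_pi h ht.2⟩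
    have hangle (h : 0 < t) : polarAngle !₂[r * cos t, r * sin t] = t := by
      rw [polarAngle, hnorm]
      simp only [Matrix.cons_val_zero]
      rw [mul_div_cancel_left₀ _ hr.ne', arccos_cos h.le ht.2.le]
    simp only [Set.indicator, mem_preimage, hpt, hnorm, upperHalfBall, mem_ofPred_eq, mem_prod,
      mem_Ioo, Matrix.cons_val_one, Matrix.cons_val_zero, hupper]
    split_ifs with h1 h2 h2
    · rw [hangle h1.2]
    · exact absurd ⟨⟨hr, h1.1⟩, h1.2, ht.2⟩ h2
    · exact absurd ⟨h2.1.2, h2.2.1⟩ h1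
    · exact smul_zero _
  calc ∫ x in upperHalfBall R, g (‖x‖, polarAngle x)
      = ∫ q in T.symm ⁻¹' upperHalfBall R, g (‖T.symm q‖, polarAngle (T.symm q)) :=
        (hT.symm.setIntegral_preimage_emb T.symm.measurableEmbedding _ _).symm
    _ = ∫ q, (T.symm ⁻¹' upperHalfBall R).indicator
          (fun q => g (‖T.symm q‖, polarAngle (T.symm q))) q :=
        (integral_indicator (T.symm.measurable (measurableSet_upperHalfBall R))).symm
    _ = ∫ p in polarCoord.target, ((Ioo 0 R ×ˢ Ioo 0 π).indicator fun p => p.1 • g p) p := by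
        rw [← integral_comp_polarCoord_symm]
        exact setIntegral_congr_fun polarCoord.open_target.measurableSet hpolar
    _ = ∫ p in Ioo 0 R ×ˢ Ioo 0 π, p.1 • g p := by
        rw [setIntegral_indicator (measurableSet_Ioo.prod measurableSet_Ioo), inter_eq_right.2]
        rintro ⟨r, t⟩ ⟨hr, ht⟩
        exact ⟨hr.1, by linarith [ht.1, pi_pos], ht.2⟩

end EuclideanSpace

theorem MeasureTheory.IntegrableOn.mul_prod {α β L : Type*} [MeasurableSpace α]
    [MeasurableSpace β] [NormedRing L] {μ : Measure α} {ν : Measure β} [SFinite μ] [SFinite ν]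
    {f : α → L} {g : β → L} {s : Set α} {t : Set β}
    (hf : IntegrableOn f s μ) (hg : IntegrableOn g t ν) :
    IntegrableOn (fun p => f p.1 * g p.2) (s ×ˢ t) (μ.prod ν) := by
  rw [IntegrableOn, ← Measure.prod_restrict]
  exact Integrable.mul_prod hf hg

theorem integral_one_add_sq_sub_pi_div_two :
    ∫ t in Ioo 0 π, (1 + (t - π / 2) ^ 2) = π + π ^ 3 / 12 := by
  rw [← integral_Ioc_eq_integral_Ioo, ← intervalIntegral.integral_of_le pi_pos.le,
    intervalIntegral.integral_add intervalIntegrable_const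
      ((by fun_prop : Continuous fun t : ℝ => (t - π / 2) ^ 2).intervalIntegrable _ _),
    intervalIntegral.integral_comp_sub_right (· ^ 2), integral_pow,
    intervalIntegral.integral_const, smul_eq_mul]
  ring

theorem setIntegral_Ioo_zero_const_mul {b : ℝ} (c : ℝ) (hb : 0 ≤ b) :
    ∫ r in Ioo 0 b, c * r = c * (b ^ 2 / 2) := by
  rw [← integral_Ioc_eq_integral_Ioo, ← intervalIntegral.integral_of_le hb,
    intervalIntegral.integral_const_mul, integral_id]
  ring

theorem setIntegral_Ico_const_div {a b : ℝ} (c : ℝ) (ha : 0 < a) (hab : a ≤ b) :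
    ∫ r in Ico a b, c / r = c * log (b / a) := by
  simp only [div_eq_mul_inv c]
  rw [integral_Ico_eq_integral_Ioo, ← integral_Ioc_eq_integral_Ioo,
    ← intervalIntegral.integral_of_le hab, intervalIntegral.integral_const_mul,
    integral_inv_of_pos ha (ha.trans_le hab)]

open EuclideanSpace

/-- `ξ` in polar coordinates `(r, θ)`, with `L` standing for `log (1 / δ)`. -/
noncomputable def xiProfile (δ γ L : ℝ) (p : ℝ × ℝ) : ℝ :=
  if δ ≤ p.1 then γ * (p.2 - π / 2) / L else γ * p.1 * (p.2 - π / 2) / (δ * L)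

noncomputable def xiEnergyDensity (δ γ L : ℝ) (p : ℝ × ℝ) : ℝ :=
  if δ ≤ p.1 then (γ / L) ^ 2 / p.1 ^ 2 else (γ / (δ * L)) ^ 2 * (1 + (p.2 - π / 2) ^ 2)

theorem hasFDerivAt_xiProfile_of_lt {δ γ L : ℝ} {p : ℝ × ℝ} (hp : δ < p.1) :
    HasFDerivAt (xiProfile δ γ L)
      ((0 : ℝ) • ContinuousLinearMap.fst ℝ ℝ ℝ + (γ / L) • ContinuousLinearMap.snd ℝ ℝ ℝ) p := by
  have hev : xiProfile δ γ L =ᶠ[nhds p] fun q => γ / L * (q.2 - π / 2) := by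
    filter_upwards [continuous_fst.isOpen_preimage _ isOpen_Ioi |>.mem_nhds hp] with q hq
    rw [xiProfile, if_pos (le_of_lt hq)]
    ring
  refine (((hasFDerivAt_snd).sub_const (π / 2)).const_mul (γ / L)).congr_of_eventuallyEq hev
    |>.congr_fderiv (ContinuousLinearMap.ext fun q => ?_)
  simp

theorem hasFDerivAt_xiProfile_of_gt {δ γ L : ℝ} {p : ℝ × ℝ} (hp : p.1 < δ) :
    HasFDerivAt (xiProfile δ γ L)
      ((γ * (p.2 - π / 2) / (δ * L)) • ContinuousLinearMap.fst ℝ ℝ ℝ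
        + (γ * p.1 / (δ * L)) • ContinuousLinearMap.snd ℝ ℝ ℝ) p := by
  have hev : xiProfile δ γ L =ᶠ[nhds p] fun q => γ / (δ * L) * (q.1 * (q.2 - π / 2)) := by
    filter_upwards [continuous_fst.isOpen_preimage _ isOpen_Iio |>.mem_nhds hp] with q hq
    rw [xiProfile, if_neg (not_le.2 hq)]
    ring
  refine ((hasFDerivAt_fst.mul (hasFDerivAt_snd.sub_const (π / 2))).const_mul (γ / (δ * L)))
    |>.congr_of_eventuallyEq hev |>.congr_fderiv (ContinuousLinearMap.ext fun q => ?_)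
  simp only [smul_add, add_apply, smul_apply, ContinuousLinearMap.coe_snd', smul_eq_mul,
    ContinuousLinearMap.coe_fst']
  ring

theorem sq_norm_fderiv_xiProfile {δ γ L : ℝ} {x : EuclideanSpace ℝ (Fin 2)} (hx : 0 < x 1)
    (hxδ : ‖x‖ ≠ δ) :
    ‖fderiv ℝ (fun y => xiProfile δ γ L (‖y‖, polarAngle y)) x‖ ^ 2
      = xiEnergyDensity δ γ L (‖x‖, polarAngle x) := by
  rcases hxδ.lt_or_gt with hlt | hgt
  · rw [sq_norm_fderiv_comp_norm_polarAngle hx (hasFDerivAt_xiProfile_of_gt hlt), xiEnergyDensity,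
      if_neg (not_le.2 hlt)]
    field_simp [(norm_pos_of_pos_one hx).ne']
    ring
  · rw [sq_norm_fderiv_comp_norm_polarAngle hx (hasFDerivAt_xiProfile_of_lt hgt), xiEnergyDensity,
      if_pos hgt.le]
    ring

theorem smul_xiEnergyDensity_of_lt {δ γ L : ℝ} {p : ℝ × ℝ} (hp : p.1 < δ) :
    p.1 • xiEnergyDensity δ γ L p = (γ / (δ * L)) ^ 2 * p.1 * (1 + (p.2 - π / 2) ^ 2) := by
  rw [xiEnergyDensity, if_neg (not_le.2 hp), smul_eq_mul]
  ring

theorem smul_xiEnergyDensity_of_le {δ γ L : ℝ} {p : ℝ × ℝ} (hδ : 0 < δ) (hp : δ ≤ p.1) :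
    p.1 • xiEnergyDensity δ γ L p = (γ / L) ^ 2 / p.1 * 1 := by
  have : p.1 ≠ 0 := (hδ.trans_le hp).ne'
  rw [xiEnergyDensity, if_pos hp, smul_eq_mul]
  field_simp

theorem integral_xiEnergyDensity {δ : ℝ} (γ L : ℝ) (hδ0 : 0 < δ) (hδ1 : δ < 1) :
    ∫ p in Ioo 0 1 ×ˢ Ioo 0 π, p.1 • xiEnergyDensity δ γ L p
      = π * (γ / L) ^ 2 * log (1 / δ) + π * (γ / L) ^ 2 * (1 / 2 + π ^ 2 / 24) := by
  have hinner : EqOn (fun p : ℝ × ℝ => p.1 • xiEnergyDensity δ γ L p)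
      (fun p => (γ / (δ * L)) ^ 2 * p.1 * (1 + (p.2 - π / 2) ^ 2)) (Ioo 0 δ ×ˢ Ioo 0 π) :=
    fun p hp => smul_xiEnergyDensity_of_lt hp.1.2
  have houter : EqOn (fun p : ℝ × ℝ => p.1 • xiEnergyDensity δ γ L p)
      (fun p => (γ / L) ^ 2 / p.1 * 1) (Ico δ 1 ×ˢ Ioo 0 π) :=
    fun p hp => smul_xiEnergyDensity_of_le hδ0 hp.1.1
  have hmeas_inner : MeasurableSet (Ioo 0 δ ×ˢ Ioo 0 π) := measurableSet_Ioo.prod measurableSet_Ioo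
  have hmeas_outer : MeasurableSet (Ico δ 1 ×ˢ Ioo 0 π) := measurableSet_Ico.prod measurableSet_Ioo
  have hint_inner : IntegrableOn
      (fun p : ℝ × ℝ => (γ / (δ * L)) ^ 2 * p.1 * (1 + (p.2 - π / 2) ^ 2))
      (Ioo 0 δ ×ˢ Ioo 0 π) := by
    rw [Measure.volume_eq_prod]
    exact IntegrableOn.mul_prod
      ((continuous_const_mul ((γ / (δ * L)) ^ 2)).integrableOn_Icc.mono_set Ioo_subset_Icc_self)
      ((by fun_prop : Continuous fun t : ℝ => 1 + (t - π / 2) ^ 2).integrableOn_Icc.mono_set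
        Ioo_subset_Icc_self)
  have hint_outer : IntegrableOn (fun p : ℝ × ℝ => (γ / L) ^ 2 / p.1 * 1)
      (Ico δ 1 ×ˢ Ioo 0 π) := by
    rw [Measure.volume_eq_prod]
    refine IntegrableOn.mul_prod (ContinuousOn.integrableOn_Icc ?_ |>.mono_set Ico_subset_Icc_self)
      (integrableOn_const (C := (1 : ℝ)) measure_Ioo_lt_top.ne)
    exact continuousOn_const.div continuousOn_id fun r hr => (hδ0.trans_le hr.1).ne'
  have hsplit : Ioo (0 : ℝ) 1 ×ˢ Ioo 0 π = Ioo 0 δ ×ˢ Ioo 0 π ∪ Ico δ 1 ×ˢ Ioo 0 π := by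
    rw [← union_prod, Ioo_union_Ico_eq_Ioo hδ0 hδ1.le]
  have hdisj : Disjoint (Ioo 0 δ ×ˢ Ioo 0 π) (Ico δ 1 ×ˢ Ioo (0 : ℝ) π) :=
    disjoint_prod.2 (Or.inl (disjoint_left.2 fun _ h1 h2 => (not_le.2 h1.2) h2.1))
  rw [hsplit, setIntegral_union hdisj hmeas_outer (hint_inner.congr_fun hinner.symm hmeas_inner)
      (hint_outer.congr_fun houter.symm hmeas_outer),
    setIntegral_congr_fun hmeas_inner hinner, setIntegral_congr_fun hmeas_outer houter,
    Measure.volume_eq_prod,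
    setIntegral_prod_mul ((γ / (δ * L)) ^ 2 * ·) (fun t => 1 + (t - π / 2) ^ 2),
    setIntegral_prod_mul ((γ / L) ^ 2 / ·) (fun _ => 1), integral_one_add_sq_sub_pi_div_two,
    setIntegral_Ioo_zero_const_mul _ hδ0.le, setIntegral_Ico_const_div _ hδ0 hδ1.le,
    setIntegral_const, Real.volume_real_Ioo_of_le pi_pos.le]
  field_simp
  ring

theorem xi_dirichlet_energy_general (δ γ : ℝ) (hδ : δ ∈ Set.Ioo (0 : ℝ) 1) :
    let θ : EuclideanSpace ℝ (Fin 2) → ℝ := fun x => Real.arccos (x 0 / ‖x‖)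
    let ξ : EuclideanSpace ℝ (Fin 2) → ℝ := fun x =>
      if δ ≤ ‖x‖ then γ * (θ x - Real.pi / 2) / Real.log (1 / δ)
      else γ * ‖x‖ * (θ x - Real.pi / 2) / (δ * Real.log (1 / δ))
    let Bplus : Set (EuclideanSpace ℝ (Fin 2)) := {x | ‖x‖ < 1 ∧ 0 < x 1}
    (∫ x in Bplus, ‖fderiv ℝ ξ x‖ ^ 2) =
      Real.pi * γ ^ 2 / Real.log (1 / δ) +
        Real.pi * γ ^ 2 / (Real.log (1 / δ)) ^ 2 * (1 / 2 + Real.pi ^ 2 / 24) := by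
  intro θ ξ Bplus
  obtain ⟨hδ0, hδ1⟩ := hδ
  have hL : log (1 / δ) ≠ 0 := (log_pos (one_lt_one_div hδ0 hδ1)).ne'
  have hcircle : ∀ᵐ x : EuclideanSpace ℝ (Fin 2), ‖x‖ ≠ δ := by
    rw [ae_iff]
    refine measure_mono_null (fun x hx => ?_) (Measure.addHaar_sphere volume 0 δ)
    simpa using hx
  have hdensity : ∀ᵐ x, x ∈ Bplus →
      ‖fderiv ℝ ξ x‖ ^ 2 = xiEnergyDensity δ γ (log (1 / δ)) (‖x‖, polarAngle x) :=
    hcircle.mono fun x hxδ hx => sq_norm_fderiv_xiProfile hx.2 hxδ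
  calc ∫ x in Bplus, ‖fderiv ℝ ξ x‖ ^ 2
      = ∫ x in upperHalfBall 1, xiEnergyDensity δ γ (log (1 / δ)) (‖x‖, polarAngle x) :=
        setIntegral_congr_ae (measurableSet_upperHalfBall 1) hdensity
    _ = _ := by
        rw [setIntegral_upperHalfBall_eq_polar, integral_xiEnergyDensity γ _ hδ0 hδ1]
        field_simp

theorem xi_dirichlet_energy (δ γ : ℝ) (hδ : δ ∈ Set.Ioo (0 : ℝ) 1) (hγ : 0 < γ) :
    let θ : EuclideanSpace ℝ (Fin 2) → ℝ := fun x => Real.arccos (x 0 / ‖x‖)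
    let ξ : EuclideanSpace ℝ (Fin 2) → ℝ := fun x =>
      if δ ≤ ‖x‖ then γ * (θ x - Real.pi / 2) / Real.log (1 / δ)
      else γ * ‖x‖ * (θ x - Real.pi / 2) / (δ * Real.log (1 / δ))
    let Bplus : Set (EuclideanSpace ℝ (Fin 2)) := {x | ‖x‖ < 1 ∧ 0 < x 1}
    (∫ x in Bplus, ‖fderiv ℝ ξ x‖ ^ 2) =
      Real.pi * γ ^ 2 / Real.log (1 / δ) +
        Real.pi * γ ^ 2 / (Real.log (1 / δ)) ^ 2 * (1 / 2 + Real.pi ^ 2 / 24) :=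
  xi_dirichlet_energy_general δ γ hδ
end
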